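/- Comparison of Carleson norms of nested cubes: let p(·) be an exponent with the maximal operator bounded on L^{p(·)/p⁻} (e.g. p(·) ∈ LH with 0 < p⁻ ≤ p⁺ < ∞), and let P ⊂ P' be cubes. Then ( ‖χ_{P'}‖²_{L^{p(·)}} / ‖χ_P‖²_{L^{p(·)}} ) · ( |P| / |P'| ) ≤ C ( |P'| / |P| )^{2/p⁻ − 1}. -/

import Mathlib

open MeasureTheory Set
open scoped ENNReal NNReal

/-- The variable-exponent Lebesgue "norm" for an `ℝ≥0∞`-valued density. -/
noncomputable def vnorm {n : ℕ} (p : EuclideanSpace ℝ (Fin n) → ℝ)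
    (g : EuclideanSpace ℝ (Fin n) → ℝ≥0∞) : ℝ≥0∞ :=
  sInf {l : ℝ≥0∞ | 0 < l ∧ (∫⁻ x, (g x / l) ^ (p x)) ≤ 1}

/-- The variable-exponent Lebesgue norm of a complex-valued function. -/
noncomputable def vnormC {n : ℕ} (p : EuclideanSpace ℝ (Fin n) → ℝ)
    (f : EuclideanSpace ℝ (Fin n) → ℂ) : ℝ≥0∞ :=
  vnorm p fun x => (‖f x‖₊ : ℝ≥0∞)

/-- The (uncentered) Hardy–Littlewood maximal operator. -/
noncomputable def HLM {n : ℕ} (f : EuclideanSpace ℝ (Fin n) → ℂ)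
    (x : EuclideanSpace ℝ (Fin n)) : ℝ≥0∞ :=
  ⨆ (z : EuclideanSpace ℝ (Fin n)) (r : ℝ) (_ : 0 < r) (_ : x ∈ Metric.ball z r),
    (volume (Metric.ball z r))⁻¹ * ∫⁻ y in Metric.ball z r, (‖f y‖₊ : ℝ≥0∞)
/-- The axis-parallel cube with lower-left corner `a` and side length `s`. -/
def cube {n : ℕ} (a : EuclideanSpace ℝ (Fin n)) (s : ℝ) : Set (EuclideanSpace ℝ (Fin n)) :=
  {x | ∀ i, a i ≤ x i ∧ x i < a i + s}

/-! The big cube `P'` lies in a ball `B` of volume `≲ |P'|` which also contains `P`, so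
pointwise `χ_{P'} ≤ (|B| / |P|) · M χ_P`. Boundedness of `M` on `L^{q(·)}`, `q = p / p⁻`,
then gives `‖χ_{P'}‖_q ≲ (|P'| / |P|) ‖χ_P‖_q`. Since `‖χ_E‖_q = ‖χ_E‖_p ^ p⁻`, raising this
to the power `2 / p⁻` and multiplying by `|P| / |P'|` yields the claim. -/

section VariableExponentNorm

variable {n : ℕ}

lemma vnorm_mono {p : EuclideanSpace ℝ (Fin n) → ℝ} (hp : ∀ x, 0 ≤ p x)
    {g h : EuclideanSpace ℝ (Fin n) → ℝ≥0∞} (hgh : g ≤ h) :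
    vnorm p g ≤ vnorm p h :=
  sInf_le_sInf fun l hl => ⟨hl.1, le_trans (lintegral_mono fun x =>
    ENNReal.rpow_le_rpow (ENNReal.div_le_div_right (hgh x) l) (hp x)) hl.2⟩

lemma vnorm_const_mul_le (p : EuclideanSpace ℝ (Fin n) → ℝ)
    (g : EuclideanSpace ℝ (Fin n) → ℝ≥0∞) {c : ℝ≥0∞} (hc0 : c ≠ 0) (hct : c ≠ ⊤) :
    vnorm p (fun x => c * g x) ≤ c * vnorm p g := by
  rw [vnorm, vnorm]
  conv_rhs => rw [sInf_eq_iInf', ENNReal.mul_iInf_of_ne hc0 hct]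
  refine le_iInf fun ⟨l, hl0, hl⟩ => sInf_le ⟨ENNReal.mul_pos hc0 hl0.ne', ?_⟩
  simpa only [ENNReal.mul_div_mul_left _ _ hc0 hct] using hl

lemma vnorm_div_rpow (p : EuclideanSpace ℝ (Fin n) → ℝ)
    (g : EuclideanSpace ℝ (Fin n) → ℝ≥0∞) {r : ℝ} (hr : 0 < r) :
    vnorm (fun x => p x / r) (fun x => g x ^ r) = vnorm p g ^ r := by
  set f := ENNReal.orderIsoRpow r hr
  have hf : ∀ l, f l = l ^ r := ENNReal.orderIsoRpow_apply r hr
  have hpre : {l : ℝ≥0∞ | 0 < l ∧ ∫⁻ x, (g x / l) ^ p x ≤ 1} =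
      f ⁻¹' {m | 0 < m ∧ ∫⁻ x, (g x ^ r / m) ^ (p x / r) ≤ 1} := by
    ext l
    have hint : ∀ x, (g x ^ r / l ^ r) ^ (p x / r) = (g x / l) ^ p x := fun x => by
      rw [← ENNReal.div_rpow_of_nonneg _ _ hr.le, ← ENNReal.rpow_mul, mul_div_cancel₀ _ hr.ne']
    simp only [mem_ofPred_eq, mem_preimage, hf, hint, pos_iff_ne_zero, ne_eq,
      ENNReal.rpow_eq_zero_iff_of_pos hr]
  rw [vnorm, vnorm, hpre, ← hf, f.map_sInf, ← sInf_image, image_preimage_eq _ f.surjective]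

lemma vnorm_indicator_one_div (p : EuclideanSpace ℝ (Fin n) → ℝ)
    (S : Set (EuclideanSpace ℝ (Fin n))) {r : ℝ} (hr : 0 < r) :
    vnorm (fun x => p x / r) (S.indicator 1) = vnorm p (S.indicator 1) ^ r := by
  rw [← vnorm_div_rpow p _ hr]
  congr 1
  ext x
  by_cases hx : x ∈ S <;> simp [hx, hr]

lemma vnormC_indicator_one (p : EuclideanSpace ℝ (Fin n) → ℝ)
    (S : Set (EuclideanSpace ℝ (Fin n))) :
    vnormC p (S.indicator fun _ => (1 : ℂ)) = vnorm p (S.indicator 1) := by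
  rw [vnormC]
  congr 1
  ext x
  by_cases hx : x ∈ S <;> simp [hx]

end VariableExponentNorm

section Cubes

variable {n : ℕ}

lemma cube_eq_preimage (a : EuclideanSpace ℝ (Fin n)) (s : ℝ) :
    cube a s = (MeasurableEquiv.toLp 2 (Fin n → ℝ)).symm ⁻¹'
        univ.pi fun i => Ico (a i) (a i + s) := by
  ext x
  simp [cube, mem_pi, MeasurableEquiv.coe_toLp_symm, mem_Ico]

lemma measurableSet_cube (a : EuclideanSpace ℝ (Fin n)) (s : ℝ) :
    MeasurableSet (cube a s) := by
  rw [cube_eq_preimage]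
  exact (MeasurableEquiv.toLp 2 (Fin n → ℝ)).symm.measurable
    (MeasurableSet.univ_pi fun _ => measurableSet_Ico)

lemma volume_cube (a : EuclideanSpace ℝ (Fin n)) (s : ℝ) :
    volume (cube a s) = ENNReal.ofReal s ^ n := by
  rw [cube_eq_preimage,
    (EuclideanSpace.volume_preserving_symm_measurableEquiv_toLp (Fin n)).measure_preimage
      (MeasurableSet.univ_pi fun _ => measurableSet_Ico).nullMeasurableSet,
    volume_pi_pi]
  simp [Real.volume_Ico]

lemma cube_subset_ball (a : EuclideanSpace ℝ (Fin n)) {s : ℝ} (hs : 0 < s) :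
    cube a s ⊆ Metric.ball a (s * (n + 1)) := by
  intro x hx
  have hcoord : ∀ i, dist (x i) (a i) ^ 2 ≤ s ^ 2 := fun i => by
    rw [Real.dist_eq, sq_abs]
    nlinarith [hx i]
  have hsum : ∑ i, dist (x i) (a i) ^ 2 ≤ n * s ^ 2 := by
    simpa using Finset.sum_le_sum fun i (_ : i ∈ Finset.univ) => hcoord i
  rw [Metric.mem_ball, EuclideanSpace.dist_eq, Real.sqrt_lt' (by positivity)]
  nlinarith [sq_nonneg (n * s)]

lemma ball_subset_cube (z : EuclideanSpace ℝ (Fin n)) (r : ℝ) :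
    Metric.ball z r ⊆ cube (z - WithLp.toLp 2 fun _ => r) (2 * r) := by
  intro x hx i
  have := (PiLp.dist_apply_le x z i).trans_lt hx
  rw [Real.dist_eq, abs_lt] at this
  simp only [PiLp.sub_apply]
  constructor <;> linarith

lemma volume_ball_le (z : EuclideanSpace ℝ (Fin n)) (r : ℝ) :
    volume (Metric.ball z r) ≤ ENNReal.ofReal (2 * r) ^ n :=
  (measure_mono (ball_subset_cube z r)).trans_eq (volume_cube _ _)

end Cubes

section MaximalFunction

variable {n : ℕ}

lemma measure_div_le_HLM_indicator {z x : EuclideanSpace ℝ (Fin n)} {r : ℝ} (hr : 0 < r)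
    (hx : x ∈ Metric.ball z r) {T : Set (EuclideanSpace ℝ (Fin n))} (hT : MeasurableSet T)
    (hTB : T ⊆ Metric.ball z r) :
    volume T / volume (Metric.ball z r) ≤ HLM (T.indicator fun _ => (1 : ℂ)) x := by
  have hint : ∫⁻ y in Metric.ball z r, (‖T.indicator (fun _ => (1 : ℂ)) y‖₊ : ℝ≥0∞) =
      volume T := by
    have hnorm : (fun y => (‖T.indicator (fun _ => (1 : ℂ)) y‖₊ : ℝ≥0∞)) = T.indicator 1 := by
      ext y
      by_cases hy : y ∈ T <;> simp [hy]
    rw [hnorm, lintegral_indicator_one hT, Measure.restrict_apply hT, inter_eq_left.mpr hTB]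
  rw [ENNReal.div_eq_inv_mul, ← hint]
  exact le_iSup_of_le z (le_iSup_of_le r (le_iSup_of_le hr (le_iSup_of_le hx le_rfl)))

lemma indicator_le_mul_HLM {z : EuclideanSpace ℝ (Fin n)} {r : ℝ} (hr : 0 < r)
    {S T : Set (EuclideanSpace ℝ (Fin n))} (hSB : S ⊆ Metric.ball z r)
    (hT : MeasurableSet T) (hTB : T ⊆ Metric.ball z r) (hT0 : volume T ≠ 0) :
    S.indicator 1 ≤ fun x =>
      volume (Metric.ball z r) / volume T * HLM (T.indicator fun _ => (1 : ℂ)) x := by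
  intro x
  by_cases hx : x ∈ S
  · have hB0 : volume (Metric.ball z r) ≠ 0 := (Metric.measure_ball_pos volume z hr).ne'
    have hBt : volume (Metric.ball z r) ≠ ⊤ := measure_ball_lt_top.ne
    have hTt : volume T ≠ ⊤ := ne_top_of_le_ne_top hBt (measure_mono hTB)
    calc S.indicator 1 x = volume (Metric.ball z r) / volume T *
          (volume T / volume (Metric.ball z r)) := by
          rw [indicator_of_mem hx, Pi.one_apply, div_eq_mul_inv, div_eq_mul_inv, mul_assoc,
            ← mul_assoc _ (volume T), ENNReal.inv_mul_cancel hT0 hTt, one_mul,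
            ENNReal.mul_inv_cancel hB0 hBt]
      _ ≤ _ := mul_le_mul_right (measure_div_le_HLM_indicator hr (hSB hx) hT hTB) _
  · simp [hx]

end MaximalFunction

lemma vnorm_indicator_cube_le {n : ℕ} {q : EuclideanSpace ℝ (Fin n) → ℝ} (hq : ∀ x, 0 ≤ q x)
    {A : ℝ≥0∞} (hA : ∀ f : EuclideanSpace ℝ (Fin n) → ℂ, Measurable f →
      vnorm q (HLM f) ≤ A * vnormC q f)
    {a a' : EuclideanSpace ℝ (Fin n)} {s s' : ℝ} (hs : 0 < s) (hs' : 0 < s')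
    (hsub : cube a s ⊆ cube a' s') :
    vnorm q ((cube a' s').indicator 1) ≤
      ENNReal.ofReal (2 * (n + 1)) ^ n * (volume (cube a' s') / volume (cube a s)) * A *
        vnorm q ((cube a s).indicator 1) := by
  set c := ENNReal.ofReal (2 * (n + 1)) ^ n * (volume (cube a' s') / volume (cube a s))
  have hV0 : volume (cube a s) ≠ 0 := by simp [volume_cube, hs]
  have hV't : volume (cube a' s') ≠ ⊤ := by simp [volume_cube]
  have hc0 : c ≠ 0 := mul_ne_zero (pow_ne_zero _ (ENNReal.ofReal_pos.mpr (by positivity)).ne')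
    (ENNReal.div_pos (by simp [volume_cube, hs']) (by simp [volume_cube])).ne'
  have hct : c ≠ ⊤ :=
    ENNReal.mul_ne_top (ENNReal.pow_ne_top ENNReal.ofReal_ne_top) (ENNReal.div_ne_top hV't hV0)
  have hball : volume (Metric.ball a' (s' * (n + 1))) / volume (cube a s) ≤ c := by
    calc volume (Metric.ball a' (s' * (n + 1))) / volume (cube a s)
        ≤ ENNReal.ofReal (2 * (s' * (n + 1))) ^ n / volume (cube a s) := by
          gcongr; exact volume_ball_le _ _
      _ = c := by
          rw [show 2 * (s' * (n + 1)) = 2 * (n + 1) * s' by ring,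
            ENNReal.ofReal_mul (by positivity), mul_pow, ← volume_cube a' s', mul_div_assoc]
  have hr : (0 : ℝ) < s' * (n + 1) := by positivity
  have hpointwise : (cube a' s').indicator 1 ≤
      fun x => c * HLM ((cube a s).indicator fun _ => (1 : ℂ)) x :=
    (indicator_le_mul_HLM hr (cube_subset_ball a' hs') (measurableSet_cube a s)
      (hsub.trans (cube_subset_ball a' hs')) hV0).trans fun x => mul_le_mul_left hball _
  calc vnorm q ((cube a' s').indicator 1)
      ≤ vnorm q fun x => c * HLM ((cube a s).indicator fun _ => (1 : ℂ)) x :=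
        vnorm_mono hq hpointwise
    _ ≤ c * vnorm q (HLM ((cube a s).indicator fun _ => (1 : ℂ))) :=
        vnorm_const_mul_le q _ hc0 hct
    _ ≤ c * (A * vnormC q ((cube a s).indicator fun _ => (1 : ℂ))) :=
        mul_le_mul_right (hA _ (measurable_const.indicator (measurableSet_cube a s))) c
    _ = c * A * vnorm q ((cube a s).indicator 1) := by
        rw [vnormC_indicator_one, ← mul_assoc]

lemma ENNReal.sq_div_sq_le_of_rpow_le {a b K : ℝ≥0∞} {r : ℝ} (hr : 0 < r)
    (h : a ^ r ≤ K * b ^ r) : a ^ 2 / b ^ 2 ≤ K ^ (2 / r) := by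
  have hsq : ∀ x : ℝ≥0∞, (x ^ r) ^ (2 / r) = x ^ 2 := fun x => by
    rw [← ENNReal.rpow_mul, mul_div_cancel₀ _ hr.ne', ENNReal.rpow_ofNat]
  refine ENNReal.div_le_of_le_mul ?_
  calc a ^ 2 = (a ^ r) ^ (2 / r) := (hsq a).symm
    _ ≤ (K * b ^ r) ^ (2 / r) := by gcongr
    _ = K ^ (2 / r) * b ^ 2 := by
        rw [ENNReal.mul_rpow_of_nonneg _ _ (by positivity), hsq]

theorem nested_cube_norm_comparison_general {n : ℕ}
    (p : EuclideanSpace ℝ (Fin n) → ℝ) (pm pM : ℝ) (hpm : 0 < pm)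
    (hbd : ∀ x, pm ≤ p x ∧ p x ≤ pM)
    (hmax : ∃ A : ℝ≥0∞, A < ⊤ ∧ ∀ f : EuclideanSpace ℝ (Fin n) → ℂ, Measurable f →
      vnorm (fun x => p x / pm) (HLM f) ≤ A * vnormC (fun x => p x / pm) f) :
    ∃ C : ℝ≥0∞, C < ⊤ ∧
      ∀ (a a' : EuclideanSpace ℝ (Fin n)) (s s' : ℝ), 0 < s → 0 < s' →
        cube a s ⊆ cube a' s' →
        (vnormC p ((cube a' s').indicator fun _ => (1 : ℂ))) ^ 2 /
            (vnormC p ((cube a s).indicator fun _ => (1 : ℂ))) ^ 2 *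
            (volume (cube a s) / volume (cube a' s')) ≤
          C * (volume (cube a' s') / volume (cube a s)) ^ (2 / pm - 1) := by
  obtain ⟨A, hA_lt, hA⟩ := hmax
  set Cg := ENNReal.ofReal (2 * (n + 1)) ^ n
  have hCgA : Cg * A ≠ ⊤ := ENNReal.mul_ne_top (ENNReal.pow_ne_top ENNReal.ofReal_ne_top) hA_lt.ne
  refine ⟨(Cg * A) ^ (2 / pm), ENNReal.rpow_lt_top_of_nonneg (by positivity) hCgA, ?_⟩
  intro a a' s s' hs hs' hsub
  have hq : ∀ x, 0 ≤ p x / pm := fun x => div_nonneg (hpm.trans_le (hbd x).1).le hpm.le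
  have key := vnorm_indicator_cube_le hq hA hs hs' hsub
  rw [vnorm_indicator_one_div p _ hpm, vnorm_indicator_one_div p _ hpm,
    mul_right_comm Cg] at key
  set V := volume (cube a s)
  set V' := volume (cube a' s')
  have hV0 : V ≠ 0 := by simp [V, volume_cube, hs]
  have hVt : V ≠ ⊤ := by simp [V, volume_cube]
  have hV'0 : V' ≠ 0 := by simp [V', volume_cube, hs']
  have hV't : V' ≠ ⊤ := by simp [V', volume_cube]
  rw [vnormC_indicator_one, vnormC_indicator_one]
  calc _ ≤ (Cg * A * (V' / V)) ^ (2 / pm) * (V / V') :=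
        mul_le_mul_left (ENNReal.sq_div_sq_le_of_rpow_le hpm key) _
    _ = (Cg * A) ^ (2 / pm) * (V' / V) ^ (2 / pm - 1) := by
        rw [ENNReal.mul_rpow_of_nonneg _ _ (by positivity), mul_assoc,
          ENNReal.rpow_sub _ _ (ENNReal.div_pos hV'0 hVt).ne' (ENNReal.div_ne_top hV't hV0),
          ENNReal.rpow_one, div_eq_mul_inv _ (V' / V), ENNReal.inv_div (.inl hVt) (.inl hV0)]

/-- comparison of Carleson norm factors for nested cubes. Assuming the
maximal operator is bounded on `L^{p(·)/p⁻}`, for cubes `P ⊆ P'` one has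
`(‖χ_{P'}‖² / ‖χ_P‖²) (|P| / |P'|) ≤ C (|P'|/|P|)^{2/p⁻ − 1}`. -/
theorem nested_cube_norm_comparison {n : ℕ} (hn : 1 ≤ n)
    (p : EuclideanSpace ℝ (Fin n) → ℝ) (pm pM : ℝ) (hpm : 0 < pm)
    (hbd : ∀ x, pm ≤ p x ∧ p x ≤ pM)
    (hmax : ∃ A : ℝ≥0∞, A < ⊤ ∧ ∀ f : EuclideanSpace ℝ (Fin n) → ℂ, Measurable f →
      vnorm (fun x => p x / pm) (HLM f) ≤ A * vnormC (fun x => p x / pm) f) :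
    ∃ C : ℝ≥0∞, C < ⊤ ∧
      ∀ (a a' : EuclideanSpace ℝ (Fin n)) (s s' : ℝ), 0 < s → 0 < s' →
        cube a s ⊆ cube a' s' →
        (vnormC p ((cube a' s').indicator fun _ => (1 : ℂ))) ^ 2 /
            (vnormC p ((cube a s).indicator fun _ => (1 : ℂ))) ^ 2 *
            (volume (cube a s) / volume (cube a' s')) ≤
          C * (volume (cube a' s') / volume (cube a s)) ^ (2 / pm - 1) :=
  nested_cube_norm_comparison_general p pm pM hpm hbd hmax
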